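/- arXiv:2605.30494 — 3 statements merged into one kernel-verified Lean document; each statement's English description precedes it below -/
import Mathlib

section
/- Let G be a group with identity e, let A be a unital G-graded algebra over a field, and let J be a graded ideal of A which is graded-nil. Then every finite set of pairwise orthogonal homogeneous idempotents of A/J can be lifted to a set of pairwise orthogonal homogeneous idempotents of A: given y_1, …, y_n ∈ (A/J)_e with y_i² = y_i and y_i y_j = 0 for i ≠ j, there exist x_1, …, x_n ∈ A_e with x_i² = x_i, x_i x_j = 0 for i ≠ j, and x_i + J = y_i for all i. -/
/-!
STATEMENT 4: lifting a finite set of pairwise orthogonal homogeneous idempotents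
modulo a graded-nil graded ideal of a unital graded algebra.
-/

universe u v w

variable (F : Type u) [Field F] (G : Type v) [Group G]
variable (A : Type w) [Ring A] [Algebra F A]

/-- `𝒜` is a `G`-grading of the `F`-algebra `A`:
`A = ⊕_{g ∈ G} A_g` with `A_g A_h ⊆ A_{gh}`. -/
def IsAlgebraGrading (𝒜 : G → Submodule F A) : Prop :=
  iSupIndep 𝒜 ∧ (⨆ g, 𝒜 g) = ⊤ ∧
    ∀ ⦃g h : G⦄ ⦃x y : A⦄, x ∈ 𝒜 g → y ∈ 𝒜 h → x * y ∈ 𝒜 (g * h)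

/-- `J` is a graded (two-sided) ideal of `A` which is graded-nil: every homogeneous
element of `J` is nilpotent. -/
def IsGradedNilIdeal (𝒜 : G → Submodule F A) (J : Submodule F A) : Prop :=
  (∀ a : A, ∀ x ∈ J, a * x ∈ J ∧ x * a ∈ J) ∧ (J = ⨆ g, J ⊓ 𝒜 g) ∧
    ∀ g : G, ∀ x ∈ J, x ∈ 𝒜 g → IsNilpotent x

/-- Auxiliary: lifting a single idempotent modulo an ideal, with a nilpotent error term.
The lift lies in the non-unital subring generated by the approximate idempotent. -/
theorem lift_single_idem {F : Type*} [Field F] {A : Type*} [Ring A] [Algebra F A]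
    (J : Submodule F A)
    (habs : ∀ a : A, ∀ x ∈ J, a * x ∈ J ∧ x * a ∈ J) :
    ∀ m : ℕ, ∀ b : A, b * b - b ∈ J → (b * b - b) ^ m = 0 →
    ∃ x ∈ NonUnitalSubring.closure ({b} : Set A), x * x = x ∧ x - b ∈ J := by
  intro m
  induction m using Nat.strong_induction_on with
  | _ m ih =>
    intro b hbJ hbm
    rcases le_or_gt m 1 with hm | hm
    · interval_cases m
      · -- trivial ring
        have h1 : (1 : A) = 0 := by simpa using hbm
        have hz : ∀ y : A, y = 0 := fun y => by
          calc y = y * 1 := (mul_one y).symm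
          _ = 0 := by rw [h1, mul_zero]
        exact ⟨b, NonUnitalSubring.subset_closure rfl,
          by rw [hz (b * b), hz b], by simpa [hz (b - b)] using J.zero_mem⟩
      · have h0 : b * b - b = 0 := by simpa using hbm
        exact ⟨b, NonUnitalSubring.subset_closure rfl, by
          have := sub_eq_zero.mp h0; exact this, by simpa using J.zero_mem⟩
    · set u := b * b - b with hu
      set b' := (b * b + b * b + b * b) - (b * b * b + b * b * b) with hb'
      have key : b' * b' - b' = (u * u) * (4 * u - 3) := by
        rw [hu, hb']; noncomm_ring
      have hdiff : b' - b = (1 - 2 * b) * u := by rw [hu, hb']; noncomm_ring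
      have c1 : Commute u ((4 : A) * u - 3) :=
        ((Commute.ofNat_right u 4).mul_right (Commute.refl u)).sub_right
          (Commute.ofNat_right u 3)
      have c2 : Commute (u * u) ((4 : A) * u - 3) := c1.mul_left c1
      set m' := (m + 1) / 2 with hm'
      have hm'lt : m' < m := by omega
      have hupow : (b' * b' - b') ^ m' = 0 := by
        rw [key, c2.mul_pow, show u * u = u ^ 2 from (sq u).symm, ← pow_mul]
        rw [show 2 * m' = m + (2 * m' - m) by omega, pow_add, hbm, zero_mul, zero_mul]
      have hu'J : b' * b' - b' ∈ J := by
        rw [key, mul_assoc]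
        exact (habs (u * (4 * u - 3)) u hbJ).2
      obtain ⟨x, hxcl, hxx, hxb'⟩ := ih m' hm'lt b' hu'J hupow
      have hsub : NonUnitalSubring.closure ({b'} : Set A) ≤
          NonUnitalSubring.closure ({b} : Set A) := by
        rw [NonUnitalSubring.closure_le, Set.singleton_subset_iff, hb']
        have hbmem : b ∈ NonUnitalSubring.closure ({b} : Set A) :=
          NonUnitalSubring.subset_closure rfl
        exact sub_mem (add_mem (add_mem (mul_mem hbmem hbmem) (mul_mem hbmem hbmem))
          (mul_mem hbmem hbmem))
          (add_mem (mul_mem (mul_mem hbmem hbmem) hbmem) (mul_mem (mul_mem hbmem hbmem) hbmem))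
      refine ⟨x, hsub hxcl, hxx, ?_⟩
      have hb'b : b' - b ∈ J := by rw [hdiff]; exact (habs (1 - 2 * b) u hbJ).1
      have := J.add_mem hxb' hb'b
      simpa [sub_add_sub_cancel] using this

theorem lift_orthogonal_homogeneous_idempotents (𝒜 : G → Submodule F A)
    (hgr : IsAlgebraGrading F G A 𝒜) (J : Submodule F A)
    (hJ : IsGradedNilIdeal F G A 𝒜 J)
    (n : ℕ) (a : Fin n → A) (ha : ∀ i, a i ∈ 𝒜 1)
    (haidem : ∀ i, a i * a i - a i ∈ J)
    (haorth : ∀ i j, i ≠ j → a i * a j ∈ J) :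
    ∃ x : Fin n → A, (∀ i, x i ∈ 𝒜 1) ∧ (∀ i, x i * x i = x i) ∧
      (∀ i j, i ≠ j → x i * x j = 0) ∧ ∀ i, x i - a i ∈ J := by
  obtain ⟨-, -, hmul⟩ := hgr
  obtain ⟨habs, -, hnil⟩ := hJ
  have hmul1 : ∀ {x y : A}, x ∈ 𝒜 1 → y ∈ 𝒜 1 → x * y ∈ 𝒜 1 := fun hx hy => by
    simpa using hmul hx hy
  induction n with
  | zero =>
    exact ⟨fun i => i.elim0, fun i => i.elim0, fun i => i.elim0,
      fun i => i.elim0, fun i => i.elim0⟩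
  | succ n IH =>
    obtain ⟨x, hx1, hxidem, hxorth, hxJ⟩ := IH (fun i => a i.castSucc)
      (fun i => ha _) (fun i => haidem _)
      (fun i j hij => haorth _ _ fun h => hij (Fin.castSucc_injective n h))
    set a' := a (Fin.last n) with ha'
    set f := ∑ i, x i with hf
    have hf1 : f ∈ 𝒜 1 := Submodule.sum_mem _ fun i _ => hx1 i
    have hff : f * f = f := by
      rw [hf, Finset.sum_mul_sum]
      refine Finset.sum_congr rfl fun i _ => ?_
      rw [Finset.sum_eq_single i (fun j _ hj => hxorth i j hj.symm) (by simp), hxidem i]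
    have hxf : ∀ i, x i * f = x i := fun i => by
      rw [hf, Finset.mul_sum,
        Finset.sum_eq_single i (fun j _ hj => hxorth i j hj.symm) (by simp), hxidem i]
    have hfx : ∀ i, f * x i = x i := fun i => by
      rw [hf, Finset.sum_mul,
        Finset.sum_eq_single i (fun j _ hj => hxorth j i hj) (by simp), hxidem i]
    set b := a' - f * a' - a' * f + f * (a' * f) with hb
    have hb1 : b ∈ 𝒜 1 := by
      refine Submodule.add_mem _ (Submodule.sub_mem _ (Submodule.sub_mem _ (ha _) ?_) ?_) ?_
      · exact hmul1 hf1 (ha _)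
      · exact hmul1 (ha _) hf1
      · exact hmul1 hf1 (hmul1 (ha _) hf1)
    have hfb : f * b = 0 := by
      simp only [hb, mul_sub, mul_add, ← mul_assoc, hff]
      abel
    have hbf : b * f = 0 := by
      simp only [hb, sub_mul, add_mul, mul_assoc, hff]
      abel
    have hfa : f * a' ∈ J := by
      rw [hf, Finset.sum_mul]
      refine Submodule.sum_mem _ fun i _ => ?_
      have h1 : x i * a' = (x i - a i.castSucc) * a' + a i.castSucc * a' := by
        rw [sub_mul, sub_add_cancel]
      rw [h1]
      exact J.add_mem ((habs a' _ (hxJ i)).2) (haorth _ _ (Fin.castSucc_lt_last i).ne)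
    have haf : a' * f ∈ J := by
      rw [hf, Finset.mul_sum]
      refine Submodule.sum_mem _ fun i _ => ?_
      have h1 : a' * x i = a' * (x i - a i.castSucc) + a' * a i.castSucc := by
        rw [mul_sub, sub_add_cancel]
      rw [h1]
      exact J.add_mem ((habs a' _ (hxJ i)).1) (haorth _ _ (Fin.castSucc_lt_last i).ne')
    have hba : b - a' ∈ J := by
      have h : b - a' = f * (a' * f) - f * a' - a' * f := by rw [hb]; abel
      rw [h]
      exact J.sub_mem (J.sub_mem ((habs f _ haf).1) hfa) haf
    have hbb : b * b - b ∈ J := by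
      have h : b * b - b =
          b * (b - a') + ((b - a') * a' + ((a' * a' - a') - (b - a'))) := by noncomm_ring
      rw [h]
      exact J.add_mem ((habs b _ hba).1)
        (J.add_mem ((habs a' _ hba).2) (J.sub_mem (haidem _) hba))
    have hbb1 : b * b - b ∈ 𝒜 1 := Submodule.sub_mem _ (hmul1 hb1 hb1) hb1
    obtain ⟨m, hm⟩ := hnil 1 _ hbb hbb1
    obtain ⟨y, hycl, hyy, hyb⟩ := lift_single_idem J habs m b hbb hm
    have hyS : ∀ z ∈ NonUnitalSubring.closure ({b} : Set A),
        z ∈ 𝒜 1 ∧ f * z = 0 ∧ z * f = 0 := by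
      intro z hzcl
      induction hzcl using NonUnitalSubring.closure_induction with
      | mem z hz => rw [Set.mem_singleton_iff.mp hz]; exact ⟨hb1, hfb, hbf⟩
      | zero => exact ⟨zero_mem _, mul_zero f, zero_mul f⟩
      | add p q hp hq ihp ihq =>
        exact ⟨Submodule.add_mem _ ihp.1 ihq.1,
          by rw [mul_add, ihp.2.1, ihq.2.1, add_zero],
          by rw [add_mul, ihp.2.2, ihq.2.2, add_zero]⟩
      | neg p hp ihp =>
        exact ⟨Submodule.neg_mem _ ihp.1,
          by rw [mul_neg, ihp.2.1, neg_zero], by rw [neg_mul, ihp.2.2, neg_zero]⟩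
      | mul p q hp hq ihp ihq =>
        exact ⟨hmul1 ihp.1 ihq.1,
          by rw [← mul_assoc, ihp.2.1, zero_mul], by rw [mul_assoc, ihq.2.2, mul_zero]⟩
    obtain ⟨hy1, hfy, hyf⟩ := hyS y hycl
    have hxy : ∀ i, x i * y = 0 := fun i => by
      rw [← hxf i, mul_assoc, hfy, mul_zero]
    have hyx : ∀ i, y * x i = 0 := fun i => by
      rw [← hfx i, ← mul_assoc, hyf, zero_mul]
    have hya : y - a' ∈ J := by
      have := J.add_mem hyb hba
      simpa [sub_add_sub_cancel] using this
    refine ⟨Fin.snoc x y, ?_, ?_, ?_, ?_⟩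
    · intro i
      induction i using Fin.lastCases with
      | last => simpa using hy1
      | cast i0 => simpa using hx1 i0
    · intro i
      induction i using Fin.lastCases with
      | last => simpa using hyy
      | cast i0 => simpa using hxidem i0
    · intro i j hij
      induction i using Fin.lastCases with
      | last =>
        induction j using Fin.lastCases with
        | last => exact absurd rfl hij
        | cast j0 => simpa using hyx j0
      | cast i0 =>
        induction j using Fin.lastCases with
        | last => simpa using hxy i0
        | cast j0 =>
          have : i0 ≠ j0 := fun h => hij (by rw [h])
          simpa using hxorth i0 j0 this
    · intro i
      induction i using Fin.lastCases with
      | last => simpa using hya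
      | cast i0 => simpa using hxJ i0
end

section
/- Let G be a group with identity e, let A be a unital G-graded algebra over a field, and let J be a graded ideal of A which is graded-nil. Let {E_{ij} | 1 ≤ i,j ≤ n} be a set of homogeneous n×n matrix units of A/J, so that there exist g_1, …, g_n ∈ G with E_{ij} ∈ (A/J)_{g_i g_j^{-1}} and E_{ij}E_{kl} = δ_{jk}E_{il} for all i,j,k,l. Then there exists a set {e_{ij} | 1 ≤ i,j ≤ n} of homogeneous matrix units of A with e_{ij} ∈ A_{g_i g_j^{-1}}, e_{ij}e_{kl} = δ_{jk}e_{il}, and e_{ij} + J = E_{ij} for all i, j. -/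
/-!
STATEMENT 5: lifting a set of homogeneous n×n matrix units modulo a graded-nil
graded ideal of a unital graded algebra.
-/

universe u v w
section Aux
variable {F : Type*} {A : Type*} [Field F] [Ring A] [Algebra F A]

lemma idem_nilp_zero {q : A} (h1 : q*q = q) (h2 : IsNilpotent q) : q = 0 := by
  obtain ⟨M, hM⟩ := h2
  rcases M with _ | m
  · have h0 : (1:A) = 0 := by simpa using hM
    calc q = q * 1 := (mul_one q).symm
    _ = 0 := by rw [h0, mul_zero]
  · rw [← IsIdempotentElem.pow_succ_eq m h1, hM]

lemma pow_succ_mem_aux (T : Submodule F A) (hT : ∀ x y : A, x ∈ T → y ∈ T → x*y ∈ T)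
    {x : A} (hx : x ∈ T) : ∀ k : ℕ, x^(k+1) ∈ T := by
  intro k; induction k with
  | zero => simpa using hx
  | succ k ih => rw [pow_succ]; exact hT _ _ ih hx

lemma lift_idem_aux (T J : Submodule F A)
    (hT : ∀ x y : A, x ∈ T → y ∈ T → x*y ∈ T)
    (hJl : ∀ a x : A, x ∈ J → a * x ∈ J) (hJr : ∀ a x : A, x ∈ J → x * a ∈ J) :
    ∀ (m : ℕ) (x : A), x ∈ T → x*x - x ∈ J → (x*x - x)^m = 0 →
    ∃ y : A, y*y = y ∧ y ∈ T ∧ y - x ∈ J ∧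
      (∀ s : A, s * x = 0 → s * y = 0) ∧ (∀ s : A, x * s = 0 → y * s = 0) := by
  intro m
  induction m using Nat.strong_induction_on with
  | _ m ih =>
    intro x hxT hxJ hxm
    by_cases hz : x*x - x = 0
    · have hxx : x * x = x := by rwa [sub_eq_zero] at hz
      exact ⟨x, hxx, hxT, by simp, fun s hs => hs, fun s hs => hs⟩
    · rcases m with _ | m
      · exfalso
        apply hz
        have h0 : (1:A) = 0 := by simpa using hxm
        calc x*x - x = (x*x - x) * 1 := (mul_one _).symm
        _ = 0 := by rw [h0, mul_zero]
      · -- m+1 ≥ 1; if m = 0 then z = 0 contradiction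
        rcases m with _ | m
        · exact absurd (by simpa using hxm) hz
        · -- now nil exponent is m+2 ≥ 2
          set x' : A := 3*(x*x) - 2*(x*x*x) with hx'
          set z : A := x*x - x with hzdef
          set w : A := 4*(x*x) - 4*x - 3 with hw
          have key : x'*x' - x' = z*z*w := by rw [hx', hzdef, hw]; noncomm_ring
          have hzw : Commute z w := by
            show z * w = w * z
            rw [hzdef, hw]; noncomm_ring
          have hx'T : x' ∈ T := by
            have h2 : x*x ∈ T := hT _ _ hxT hxT
            have h3 : x*x*x ∈ T := hT _ _ h2 hxT
            have e1 : x' = (3:ℕ) • (x*x) - (2:ℕ) • (x*x*x) := by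
              rw [hx']; simp [nsmul_eq_mul]
            rw [e1]
            exact sub_mem (nsmul_mem h2 3) (nsmul_mem h3 2)
          have hx'J : x'*x' - x' ∈ J := by rw [key]; exact hJr _ _ (hJr _ _ hxJ)
          set k : ℕ := (m + 3) / 2 with hk
          have hkm : k < m + 2 := by omega
          have hx'm : (x'*x' - x')^k = 0 := by
            rw [key, (hzw.mul_left hzw).mul_pow,
              show z*z = z^2 from (sq z).symm, ← pow_mul,
              show 2*k = (m+2) + (2*k - (m+2)) by omega, pow_add, hxm, zero_mul, zero_mul]
          obtain ⟨y, hyy, hyT, hyx', hys, hsy⟩ := ih k hkm x' hx'T hx'J hx'm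
          refine ⟨y, hyy, hyT, ?_, ?_, ?_⟩
          · have h1 : x' - x ∈ J := by
              have e1 : x' - x = z * (1 - 2*x) := by rw [hx', hzdef]; noncomm_ring
              rw [e1]; exact hJr _ _ hxJ
            have := add_mem hyx' h1
            rwa [sub_add_sub_cancel] at this
          · intro s hs
            apply hys
            have e1 : x' = x * (3*x - 2*(x*x)) := by rw [hx']; noncomm_ring
            rw [e1, ← mul_assoc, hs, zero_mul]
          · intro s hs
            apply hsy
            have e1 : x' = (3*x - 2*(x*x)) * x := by rw [hx']; noncomm_ring
            rw [e1, mul_assoc, hs, mul_zero]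

lemma corner_inv_aux {e n : A} (he : e*e = e) (hen : e*n = n) (hne : n*e = n)
    (M : ℕ) (hM : n^M = 0) :
    (e - n) * (e + ∑ m ∈ Finset.range M, n^(m+1)) = e ∧
    (e + ∑ m ∈ Finset.range M, n^(m+1)) * (e - n) = e ∧
    e * (e + ∑ m ∈ Finset.range M, n^(m+1)) = e + ∑ m ∈ Finset.range M, n^(m+1) ∧
    (e + ∑ m ∈ Finset.range M, n^(m+1)) * e = e + ∑ m ∈ Finset.range M, n^(m+1) := by
  set v : A := ∑ m ∈ Finset.range M, n^(m+1) with hv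
  have hev : e * v = v := by
    rw [hv, Finset.mul_sum]
    refine Finset.sum_congr rfl fun m _ => ?_
    rw [pow_succ', ← mul_assoc, hen, ← pow_succ']
  have hve : v * e = v := by
    rw [hv, Finset.sum_mul]
    refine Finset.sum_congr rfl fun m _ => ?_
    rw [pow_succ, mul_assoc, hne, ← pow_succ]
  have hnv : n * v = v - n := by
    have e1 : n * v = ∑ m ∈ Finset.range M, (n^(m+1+1) - n^(m+1)) + v := by
      rw [hv, Finset.mul_sum, Finset.sum_sub_distrib]
      have : ∀ m ∈ Finset.range M, n * n^(m+1) = n^(m+1+1) := fun m _ => (pow_succ' n (m+1)).symm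
      rw [Finset.sum_congr rfl this]
      abel
    rw [e1, Finset.sum_range_sub (f := fun m => n^(m+1))]
    have hM1 : n^(M+1) = 0 := by rw [pow_succ, hM, zero_mul]
    rw [hM1, pow_one]
    abel
  have hvn : v * n = v - n := by
    have e1 : v * n = ∑ m ∈ Finset.range M, (n^(m+1+1) - n^(m+1)) + v := by
      rw [hv, Finset.sum_mul, Finset.sum_sub_distrib]
      have : ∀ m ∈ Finset.range M, n^(m+1) * n = n^(m+1+1) := fun m _ => (pow_succ n (m+1)).symm
      rw [Finset.sum_congr rfl this]
      abel
    rw [e1, Finset.sum_range_sub (f := fun m => n^(m+1))]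
    have hM1 : n^(M+1) = 0 := by rw [pow_succ, hM, zero_mul]
    rw [hM1, pow_one]
    abel
  refine ⟨?_, ?_, ?_, ?_⟩
  · rw [sub_mul, mul_add, mul_add, he, hev, hnv, hne]
    abel
  · rw [mul_sub, add_mul, add_mul, he, hve, hvn, hen]
    abel
  · rw [mul_add, he, hev]
  · rw [add_mul, he, hve]
end Aux



variable (F : Type u) [Field F] (G : Type v) [Group G]
variable (A : Type w) [Ring A] [Algebra F A]

variable (F : Type u) [Field F] (G : Type v) [Group G]
variable (A : Type w) [Ring A] [Algebra F A]

theorem lift_homogeneous_matrix_units (𝒜 : G → Submodule F A)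
    (hgr : IsAlgebraGrading F G A 𝒜) (J : Submodule F A)
    (hJ : IsGradedNilIdeal F G A 𝒜 J)
    (n : ℕ) (g : Fin n → G) (E : Fin n → Fin n → A)
    (hE : ∀ i j, E i j ∈ 𝒜 (g i * (g j)⁻¹))
    (hEmul : ∀ i j k l, E i j * E k l - (if j = k then E i l else 0) ∈ J) :
    ∃ e : Fin n → Fin n → A, (∀ i j, e i j ∈ 𝒜 (g i * (g j)⁻¹)) ∧
      (∀ i j k l, e i j * e k l = if j = k then e i l else 0) ∧
      ∀ i j, e i j - E i j ∈ J := by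
  rcases Nat.eq_zero_or_pos n with hn | hn
  · subst hn
    exact ⟨E, fun i => i.elim0, fun i => i.elim0, fun i => i.elim0⟩
  -- basic tools
  have hmul : ∀ ⦃a b : G⦄ ⦃x y : A⦄, x ∈ 𝒜 a → y ∈ 𝒜 b → x * y ∈ 𝒜 (a*b) := hgr.2.2
  have hT : ∀ x y : A, x ∈ 𝒜 1 → y ∈ 𝒜 1 → x * y ∈ 𝒜 1 := by
    intro x y hx hy
    simpa using hmul hx hy
  have hJl : ∀ a x : A, x ∈ J → a * x ∈ J := fun a x hx => (hJ.1 a x hx).1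
  have hJr : ∀ a x : A, x ∈ J → x * a ∈ J := fun a x hx => (hJ.1 a x hx).2
  have hnil : ∀ x : A, x ∈ J → x ∈ 𝒜 1 → IsNilpotent x := fun x hx h1 => hJ.2.2 1 x hx h1
  have mcast : ∀ {a b : G} {x : A}, a = b → x ∈ 𝒜 a → x ∈ 𝒜 b := by
    rintro a b x rfl h; exact h
  have jmul : ∀ {x y z w : A}, x - y ∈ J → z - w ∈ J → x*z - y*w ∈ J := by
    intro x y z w h1 h2
    have e1 : x*z - y*w = (x - y)*z + y*(z - w) := by noncomm_ring
    rw [e1]; exact add_mem (hJr _ _ h1) (hJl _ _ h2)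
  have jtrans : ∀ {x y z : A}, x - y ∈ J → y - z ∈ J → x - z ∈ J := by
    intro x y z h1 h2
    have := add_mem h1 h2; rwa [sub_add_sub_cancel] at this
  have jEE : ∀ (i j k : Fin n), E i j * E j k - E i k ∈ J := by
    intro i j k
    have := hEmul i j j k
    rwa [if_pos rfl] at this
  have jEE0 : ∀ (i j k l : Fin n), j ≠ k → E i j * E k l ∈ J := by
    intro i j k l hjk
    have := hEmul i j k l
    rwa [if_neg hjk, sub_zero] at this
  have hdiagT : ∀ i : Fin n, E i i ∈ 𝒜 1 := fun i => mcast (mul_inv_cancel (g i)) (hE i i)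
  -- Step 1: orthogonal idempotent family
  have orth : ∀ k : ℕ, k ≤ n → ∃ e : Fin n → A,
      (∀ i : Fin n, (i:ℕ) < k → e i * e i = e i ∧ e i ∈ 𝒜 1 ∧ e i - E i i ∈ J) ∧
      (∀ i j : Fin n, (i:ℕ) < k → (j:ℕ) < k → i ≠ j → e i * e j = 0) := by
    intro k
    induction k with
    | zero =>
      intro _
      exact ⟨fun _ => 0, fun i hi => absurd hi (by omega), fun i j hi _ _ => absurd hi (by omega)⟩
    | succ k ihk =>
      intro hk1
      obtain ⟨e, h1, h2⟩ := ihk (by omega)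
      set ik : Fin n := ⟨k, by omega⟩ with hik
      set P : Finset (Fin n) := Finset.univ.filter (fun i : Fin n => (i:ℕ) < k) with hP
      have hPmem : ∀ i : Fin n, i ∈ P ↔ (i:ℕ) < k := by
        intro i; simp [hP]
      set s : A := ∑ i ∈ P, e i with hs
      have hes : ∀ i ∈ P, e i * s = e i := by
        intro i hi
        rw [hs, Finset.mul_sum]
        rw [Finset.sum_eq_single_of_mem i hi]
        · exact (h1 i ((hPmem i).1 hi)).1
        · intro j hj hne
          exact h2 i j ((hPmem i).1 hi) ((hPmem j).1 hj) (Ne.symm hne)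
      have hse : ∀ i ∈ P, s * e i = e i := by
        intro i hi
        rw [hs, Finset.sum_mul]
        rw [Finset.sum_eq_single_of_mem i hi]
        · exact (h1 i ((hPmem i).1 hi)).1
        · intro j hj hne
          exact h2 j i ((hPmem j).1 hj) ((hPmem i).1 hi) hne
      have hss : s * s = s := by
        rw [hs, Finset.sum_mul]
        refine Finset.sum_congr rfl fun i hi => ?_
        rw [← hs]; exact hes i hi
      have hsT : s ∈ 𝒜 1 := by
        rw [hs]; exact Submodule.sum_mem _ fun i hi => (h1 i ((hPmem i).1 hi)).2.1
      have hsJ : s - (∑ i ∈ P, E i i) ∈ J := by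
        rw [hs, ← Finset.sum_sub_distrib]
        exact Submodule.sum_mem _ fun i hi => (h1 i ((hPmem i).1 hi)).2.2
      -- the candidate
      set x0 : A := E ik ik with hx0
      have hx0T : x0 ∈ 𝒜 1 := hdiagT ik
      have hx0J : x0*x0 - x0 ∈ J := jEE ik ik ik
      have hsx0 : s * x0 ∈ J := by
        have h3 : (∑ i ∈ P, E i i) * x0 ∈ J := by
          rw [Finset.sum_mul]
          refine Submodule.sum_mem _ fun i hi => ?_
          refine jEE0 i i ik ik fun hiik => ?_
          have : (i:ℕ) < k := (hPmem i).1 hi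
          rw [hiik] at this
          simp [hik] at this
        have h4 : s * x0 - (∑ i ∈ P, E i i) * x0 ∈ J := by
          rw [← sub_mul]; exact hJr _ _ hsJ
        have := add_mem h4 h3
        rwa [sub_add_cancel] at this
      have hx0s : x0 * s ∈ J := by
        have h3 : x0 * (∑ i ∈ P, E i i) ∈ J := by
          rw [Finset.mul_sum]
          refine Submodule.sum_mem _ fun i hi => ?_
          refine jEE0 ik ik i i fun hiik => ?_
          have : (i:ℕ) < k := (hPmem i).1 hi
          rw [← hiik] at this
          simp [hik] at this
        have h4 : x0 * s - x0 * (∑ i ∈ P, E i i) ∈ J := by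
          rw [← mul_sub]; exact hJl _ _ hsJ
        have := add_mem h4 h3
        rwa [sub_add_cancel] at this
      set gq : A := (1 - s) * (x0 * (1 - s)) with hgq
      have hgqx0 : gq - x0 ∈ J := by
        have e1 : gq - x0 = -(s * x0) - (x0 * s) + s * (x0 * s) := by
          rw [hgq]; noncomm_ring
        rw [e1]
        exact add_mem (sub_mem (neg_mem hsx0) hx0s) (hJl _ _ hx0s)
      have hgqT : gq ∈ 𝒜 1 := by
        have e1 : gq = x0 - s * x0 - x0 * s + s * (x0 * s) := by rw [hgq]; noncomm_ring
        rw [e1]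
        exact add_mem (sub_mem (sub_mem hx0T (hT _ _ hsT hx0T)) (hT _ _ hx0T hsT))
          (hT _ _ hsT (hT _ _ hx0T hsT))
      have hsgq : s * gq = 0 := by
        have h0 : s * (1 - s) = 0 := by rw [mul_sub, mul_one, hss, sub_self]
        rw [hgq, ← mul_assoc, h0, zero_mul]
      have hgqs : gq * s = 0 := by
        have h0 : (1 - s) * s = 0 := by rw [sub_mul, one_mul, hss, sub_self]
        rw [hgq, mul_assoc, mul_assoc, h0, mul_zero, mul_zero]
      have hgqJ : gq * gq - gq ∈ J := by
        have e1 : gq * gq - gq = (gq - x0) * gq + x0 * (gq - x0) + (x0*x0 - x0) + (x0 - gq) := by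
          noncomm_ring
        rw [e1]
        refine add_mem (add_mem (add_mem (hJr _ _ hgqx0) (hJl _ _ hgqx0)) hx0J) ?_
        rw [show x0 - gq = -(gq - x0) by abel]
        exact neg_mem hgqx0
      obtain ⟨M, hM⟩ := hnil _ hgqJ (sub_mem (hT _ _ hgqT hgqT) hgqT)
      obtain ⟨y, hyy, hyT, hyJ, hl, hr⟩ := lift_idem_aux (𝒜 1) J hT hJl hJr M gq hgqT hgqJ hM
      have hsy : s * y = 0 := hl s hsgq
      have hys : y * s = 0 := hr s hgqs
      refine ⟨Function.update e ik y, ?_, ?_⟩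
      · intro i hi
        by_cases hiik : i = ik
        · subst hiik
          rw [Function.update_self]
          exact ⟨hyy, hyT, jtrans hyJ (jtrans hgqx0 (by rw [hx0]; simp))⟩
        · rw [Function.update_of_ne hiik]
          have : (i:ℕ) < k := by
            rcases Nat.lt_succ_iff_lt_or_eq.1 hi with h | h
            · exact h
            · exact absurd (Fin.ext h : i = ik) hiik
          exact h1 i this
      · intro i j hi hj hij
        by_cases hiik : i = ik <;> by_cases hjik : j = ik
        · exact absurd (hiik.trans hjik.symm) hij
        · subst hiik
          rw [Function.update_self, Function.update_of_ne hjik]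
          have hjP : j ∈ P := (hPmem j).2 (by
            rcases Nat.lt_succ_iff_lt_or_eq.1 hj with h | h
            · exact h
            · exact absurd (Fin.ext h : j = ik) hjik)
          rw [← hse j hjP, ← mul_assoc, hys, zero_mul]
        · subst hjik
          rw [Function.update_self, Function.update_of_ne hiik]
          have hiP : i ∈ P := (hPmem i).2 (by
            rcases Nat.lt_succ_iff_lt_or_eq.1 hi with h | h
            · exact h
            · exact absurd (Fin.ext h : i = ik) hiik)
          rw [← hes i hiP, mul_assoc, hsy, mul_zero]
        · rw [Function.update_of_ne hiik, Function.update_of_ne hjik]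
          have hik' : (i:ℕ) < k := by
            rcases Nat.lt_succ_iff_lt_or_eq.1 hi with h | h
            · exact h
            · exact absurd (Fin.ext h : i = ik) hiik
          have hjk' : (j:ℕ) < k := by
            rcases Nat.lt_succ_iff_lt_or_eq.1 hj with h | h
            · exact h
            · exact absurd (Fin.ext h : j = ik) hjik
          exact h2 i j hik' hjk' hij

  obtain ⟨e, he1, he2⟩ := orth n le_rfl
  have heI : ∀ i : Fin n, e i * e i = e i := fun i => (he1 i i.isLt).1
  have heT : ∀ i : Fin n, e i ∈ 𝒜 1 := fun i => (he1 i i.isLt).2.1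
  have heJ : ∀ i : Fin n, e i - E i i ∈ J := fun i => (he1 i i.isLt).2.2
  have heO : ∀ i j : Fin n, i ≠ j → e i * e j = 0 := fun i j hij => he2 i j i.isLt j.isLt hij
  -- Step 2: corner data

  have jrefl : ∀ x : A, x - x ∈ J := fun x => by simpa using J.zero_mem
  set i0 : Fin n := ⟨0, hn⟩ with hi0
  set a : Fin n → A := fun i => e i * (E i i0 * e i0) with ha
  set b : Fin n → A := fun i => e i0 * (E i0 i * e i) with hb
  set c : Fin n → A := fun i => a i * b i with hc
  have haT : ∀ i, a i ∈ 𝒜 (g i * (g i0)⁻¹) := fun i =>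
    mcast (by group) (hmul (heT i) (hmul (hE i i0) (heT i0)))
  have hbT : ∀ i, b i ∈ 𝒜 (g i0 * (g i)⁻¹) := fun i =>
    mcast (by group) (hmul (heT i0) (hmul (hE i0 i) (heT i)))
  have haJ : ∀ i, a i - E i i0 ∈ J := by
    intro i
    have h1 : a i - E i i * (E i i0 * E i0 i0) ∈ J :=
      jmul (heJ i) (jmul (jrefl (E i i0)) (heJ i0))
    have h2 : E i i * (E i i0 * E i0 i0) - E i i * E i i0 ∈ J := by
      rw [← mul_sub]; exact hJl _ _ (jEE i i0 i0)
    exact jtrans h1 (jtrans h2 (jEE i i i0))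
  have hbJ : ∀ i, b i - E i0 i ∈ J := by
    intro i
    have h1 : b i - E i0 i0 * (E i0 i * E i i) ∈ J :=
      jmul (heJ i0) (jmul (jrefl (E i0 i)) (heJ i))
    have h2 : E i0 i0 * (E i0 i * E i i) - E i0 i0 * E i0 i ∈ J := by
      rw [← mul_sub]; exact hJl _ _ (jEE i0 i i)
    exact jtrans h1 (jtrans h2 (jEE i0 i0 i))
  have heu : ∀ i, e i * a i = a i := by
    intro i; rw [ha]; show e i * (e i * _) = _
    rw [← mul_assoc, heI]
  have hue0 : ∀ i, a i * e i0 = a i := by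
    intro i; rw [ha]; show e i * (E i i0 * e i0) * e i0 = _
    rw [mul_assoc, mul_assoc, heI]
  have he0b : ∀ i, e i0 * b i = b i := by
    intro i; rw [hb]; show e i0 * (e i0 * _) = _
    rw [← mul_assoc, heI]
  have hbe : ∀ i, b i * e i = b i := by
    intro i; rw [hb]; show e i0 * (E i0 i * e i) * e i = _
    rw [mul_assoc, mul_assoc, heI]
  have hcT : ∀ i, c i ∈ 𝒜 1 := fun i => mcast (by group) (hmul (haT i) (hbT i))
  have hcJ : ∀ i, c i - E i i ∈ J := fun i => jtrans (jmul (haJ i) (hbJ i)) (jEE i i0 i)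
  have hec : ∀ i, e i * c i = c i := by
    intro i; rw [hc]; show e i * (a i * b i) = _
    rw [← mul_assoc, heu]
  have hce : ∀ i, c i * e i = c i := by
    intro i; rw [hc]; show a i * b i * e i = _
    rw [mul_assoc, hbe]
  -- corner inverses
  have hcorner : ∀ i : Fin n, ∃ d : A, c i * d = e i ∧ d * c i = e i ∧
      e i * d = d ∧ d * e i = d ∧ d ∈ 𝒜 1 ∧ d - e i ∈ J := by
    intro i
    set nn : A := e i - c i with hnn
    have hnnJ : nn ∈ J := by
      have e1 : nn = (e i - E i i) - (c i - E i i) := by rw [hnn]; abel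
      rw [e1]; exact sub_mem (heJ i) (hcJ i)
    have hnnT : nn ∈ 𝒜 1 := sub_mem (heT i) (hcT i)
    have henn : e i * nn = nn := by rw [hnn, mul_sub, heI, hec]
    have hnne : nn * e i = nn := by rw [hnn, sub_mul, heI, hce]
    obtain ⟨M, hM⟩ := hnil nn hnnJ hnnT
    obtain ⟨k1, k2, k3, k4⟩ := corner_inv_aux (heI i) henn hnne M hM
    have hcnn : e i - nn = c i := by rw [hnn]; abel
    rw [hcnn] at k1 k2
    refine ⟨e i + ∑ m ∈ Finset.range M, nn^(m+1), k1, k2, k3, k4, ?_, ?_⟩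
    · refine add_mem (heT i) (Submodule.sum_mem _ fun m _ => ?_)
      exact pow_succ_mem_aux (𝒜 1) hT hnnT m
    · rw [add_sub_cancel_left]
      refine Submodule.sum_mem _ fun m _ => ?_
      rw [pow_succ]
      exact hJl _ _ hnnJ
  choose d hd1 hd2 hd3 hd4 hdT hdJ using hcorner
  set v : Fin n → A := fun i => b i * d i with hv
  have hvT : ∀ i, v i ∈ 𝒜 (g i0 * (g i)⁻¹) := fun i =>
    mcast (by group) (hmul (hbT i) (hdT i))
  have hvJ : ∀ i, v i - E i0 i ∈ J := by
    intro i
    have hdE : d i - E i i ∈ J := jtrans (hdJ i) (heJ i)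
    exact jtrans (jmul (hbJ i) hdE) (jEE i0 i i)
  have huv : ∀ i, a i * v i = e i := by
    intro i
    rw [hv]; show a i * (b i * d i) = e i
    rw [← mul_assoc]; exact hd1 i
  have hve : ∀ i, v i * e i = v i := by
    intro i; rw [hv]; show b i * d i * e i = _
    rw [mul_assoc, hd4]
  have he0v : ∀ i, e i0 * v i = v i := by
    intro i; rw [hv]; show e i0 * (b i * d i) = _
    rw [← mul_assoc, he0b]
  have hvu : ∀ i, v i * a i = e i0 := by
    intro i
    set p : A := v i * a i with hp
    have hpp : p * p = p := by
      rw [hp, mul_assoc, ← mul_assoc (a i), huv, heu]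
    have he0p : e i0 * p = p := by rw [hp, ← mul_assoc, he0v]
    have hpe0 : p * e i0 = p := by rw [hp, mul_assoc, hue0]
    have hpT : p ∈ 𝒜 1 := mcast (by group) (hmul (hvT i) (haT i))
    have hpJ : e i0 - p ∈ J := by
      have h1 : p - E i0 i0 ∈ J := jtrans (jmul (hvJ i) (haJ i)) (jEE i0 i i0)
      have e1 : e i0 - p = (e i0 - E i0 i0) - (p - E i0 i0) := by abel
      rw [e1]; exact sub_mem (heJ i0) h1
    have hqq : (e i0 - p) * (e i0 - p) = e i0 - p := by
      have e1 : (e i0 - p) * (e i0 - p) = e i0 * e i0 - e i0 * p - p * e i0 + p * p := by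
        noncomm_ring
      rw [e1, heI, he0p, hpe0, hpp]; abel
    have hq0 : e i0 - p = 0 :=
      idem_nilp_zero hqq (hnil _ hpJ (sub_mem (heT i0) hpT))
    have := sub_eq_zero.mp hq0
    exact this.symm
  have hvu0 : ∀ i j, i ≠ j → v i * a j = 0 := by
    intro i j hij
    rw [← hve i, ← heu j, mul_assoc, ← mul_assoc (e i), heO i j hij, zero_mul, mul_zero]
  refine ⟨fun i j => a i * v j, ?_, ?_, ?_⟩
  · intro i j
    exact mcast (by group) (hmul (haT i) (hvT j))
  · intro i j k l
    by_cases hjk : j = k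
    · subst hjk
      rw [if_pos rfl, mul_assoc, ← mul_assoc (v j), hvu, he0v]
    · rw [if_neg hjk, mul_assoc, ← mul_assoc (v j), hvu0 j k hjk, zero_mul, mul_zero]
  · intro i j
    exact jtrans (jmul (haJ i) (hvJ j)) (jEE i i0 j)
end

section
/- Let F be a finite field with q elements and characteristic different from 2, and let X, Y ∈ M_2(F) be invertible matrices with X², Y² ∈ F·I_2 and XY = −YX. Consider the Z_2×Z_2-grading on E = M_2(F) given by E_{(0,0)} = F·I_2, E_{(1,0)} = F·X, E_{(0,1)} = F·Y, E_{(1,1)} = F·XY. Then for every h ∈ Z_2×Z_2 there exists s_h ∈ {1, −1} such that x^q = s_h · x for all x ∈ E_h. -/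
/-!
STATEMENT 18: for the `Z_2×Z_2`-grading on `M_2(F)` (char `F ≠ 2`, `|F| = q`) given by
`E_{(0,0)} = F·I`, `E_{(1,0)} = F·X`, `E_{(0,1)} = F·Y`, `E_{(1,1)} = F·XY`, for every
`h` there is a sign `s_h ∈ {1, −1}` with `x^q = s_h · x` for all `x ∈ E_h`.
-/

variable (F : Type*) [Field F]

/-- The `Z_2 × Z_2`-grading on `M_2(F)` determined by the anticommuting invertible
matrices `X` and `Y`. -/
def pauliGrading (X Y : Matrix (Fin 2) (Fin 2) F) :
    ZMod 2 × ZMod 2 → Submodule F (Matrix (Fin 2) (Fin 2) F) := fun h =>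
  if h = (0, 0) then Submodule.span F {(1 : Matrix (Fin 2) (Fin 2) F)}
  else if h = (1, 0) then Submodule.span F {X}
  else if h = (0, 1) then Submodule.span F {Y}
  else Submodule.span F {X * Y}

lemma pauli_aux [Fintype F] (q : ℕ) (hq : Fintype.card F = q) (hodd : q % 2 = 1)
    (M : Matrix (Fin 2) (Fin 2) F) (γ : F) (hγ : γ ≠ 0)
    (hM : M ^ 2 = γ • (1 : Matrix (Fin 2) (Fin 2) F)) :
    ∃ s : F, (s = 1 ∨ s = -1) ∧ ∀ x ∈ Submodule.span F {M}, x ^ q = s • x := by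
  obtain ⟨k, hk⟩ : ∃ k, q = 2 * k + 1 := ⟨q / 2, (Nat.div_add_mod q 2).symm.trans (by omega)⟩
  refine ⟨γ ^ k, ?_, ?_⟩
  · rw [← mul_self_eq_one_iff, ← pow_add, ← two_mul]
    have : 2 * k = q - 1 := by omega
    rw [this, ← hq]
    exact FiniteField.pow_card_sub_one_eq_one γ hγ
  · intro x hx
    obtain ⟨c, rfl⟩ := Submodule.mem_span_singleton.mp hx
    have hMq : M ^ q = γ ^ k • M := by
      rw [hk, pow_succ, pow_mul, hM, smul_pow, one_pow]
      rw [smul_mul_assoc, one_mul]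
    rw [smul_pow, hMq, ← hq, FiniteField.pow_card, smul_comm]

theorem pauli_grading_power_sign
    [Fintype F] (q : ℕ) (hq : Fintype.card F = q) (hchar : ringChar F ≠ 2)
    (X Y : Matrix (Fin 2) (Fin 2) F) (hX : IsUnit X) (hY : IsUnit Y)
    (hX2 : ∃ α : F, X ^ 2 = α • (1 : Matrix (Fin 2) (Fin 2) F))
    (hY2 : ∃ β : F, Y ^ 2 = β • (1 : Matrix (Fin 2) (Fin 2) F))
    (hXY : X * Y = -(Y * X)) :
    ∀ h : ZMod 2 × ZMod 2, ∃ s : F, (s = 1 ∨ s = -1) ∧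
      ∀ x ∈ pauliGrading F X Y h, x ^ q = s • x := by
  have hodd : q % 2 = 1 := hq ▸ FiniteField.odd_card_of_char_ne_two hchar
  obtain ⟨α, hα⟩ := hX2
  obtain ⟨β, hβ⟩ := hY2
  have hα0 : α ≠ 0 := by
    rintro rfl
    rw [zero_smul] at hα
    exact (hX.pow 2).ne_zero hα
  have hβ0 : β ≠ 0 := by
    rintro rfl
    rw [zero_smul] at hβ
    exact (hY.pow 2).ne_zero hβ
  have hXY2 : (X * Y) ^ 2 = (-(α * β)) • (1 : Matrix (Fin 2) (Fin 2) F) := by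
    have hYX : Y * X = -(X * Y) := by rw [hXY, neg_neg]
    have h1 : (X * Y) ^ 2 = X * (Y * X) * Y := by noncomm_ring
    have h3 : X * -(X * Y) * Y = -(X ^ 2 * Y ^ 2) := by noncomm_ring
    rw [h1, hYX, h3, hα, hβ, smul_mul_assoc, one_mul, smul_smul, ← neg_smul]
  intro h
  unfold pauliGrading
  split_ifs with h1 h2 h3
  · exact pauli_aux F q hq hodd 1 1 one_ne_zero (by rw [one_pow, one_smul])
  · exact pauli_aux F q hq hodd X α hα0 hα
  · exact pauli_aux F q hq hodd Y β hβ0 hβ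
  · exact pauli_aux F q hq hodd (X * Y) (-(α * β)) (by simp [hα0, hβ0]) hXY2
end
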